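/- Windschitl's formula is asymptotic to the Gamma function: lim_{x→∞} Γ(x+1) / (√(2πx)·(x/e)^x·(x·sinh(1/x))^(x/2)) = 1. -/

import Mathlib

/-!
Windschitl's correction factor tends to `1` because `1 ≤ x sinh (1/x) ≤ cosh (1/x) ≤ exp (1/(2x²))`,
so the theorem reduces to Stirling's formula for the real Gamma function, known along the integers
(`Stirling.tendsto_stirlingSeq_sqrt_pi`). Log-convexity of `Γ` (Wendel's inequality) gives
`log Γ(s + t) = log Γ s + t log s + O(1/s)` uniformly in `t ∈ [0, 1]`, and the logarithm of the
Stirling approximation satisfies the same estimate; hence the error in Stirling's formula moves by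
only `O(1/⌊x⌋)` between `⌊x⌋` and `x`.
-/

open Real Filter Topology
open scoped Nat

theorem log_sub_log_le_sub_div {a b : ℝ} (ha : 0 < a) (hb : 0 < b) :
    log b - log a ≤ (b - a) / a := by
  have := log_le_sub_one_of_pos (div_pos hb ha)
  rw [log_div hb.ne' ha.ne'] at this
  rwa [sub_div, div_self ha.ne']

theorem sub_div_le_log_sub_log {a b : ℝ} (ha : 0 < a) (hb : 0 < b) :
    (b - a) / b ≤ log b - log a := by
  have := one_sub_inv_le_log_of_pos (div_pos hb ha)
  rw [log_div hb.ne' ha.ne', inv_div] at this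
  rwa [sub_div, div_self hb.ne']

theorem log_Gamma_add_le {s t : ℝ} (hs : 0 < s) (ht₀ : 0 ≤ t) (ht₁ : t ≤ 1) :
    log (Gamma (s + t)) ≤ log (Gamma s) + t * log s := by
  have h := convexOn_log_Gamma.2 (Set.mem_Ioi.2 hs) (Set.mem_Ioi.2 (by linarith : 0 < s + 1))
    (sub_nonneg.2 ht₁) ht₀ (sub_add_cancel 1 t)
  have hGamma : log (Gamma (s + 1)) = log s + log (Gamma s) := by
    rw [Gamma_add_one hs.ne', log_mul hs.ne' (Gamma_pos_of_pos hs).ne']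
  simp only [smul_eq_mul, Function.comp_apply, hGamma] at h
  rw [show (1 - t) * s + t * (s + 1) = s + t by ring] at h
  linarith

theorem abs_log_Gamma_add_sub_le {s t : ℝ} (hs : 0 < s) (ht₀ : 0 ≤ t) (ht₁ : t ≤ 1) :
    |log (Gamma (s + t)) - log (Gamma s) - t * log s| ≤ 1 / s := by
  have hst : 0 < s + t := by linarith
  have hupper := log_Gamma_add_le hs ht₀ ht₁
  -- Stepping from `s + t` by `1 - t` reaches `s + 1`, which bounds `Γ (s + t)` from below.
  have hlower := log_Gamma_add_le hst (sub_nonneg.2 ht₁) (by linarith : 1 - t ≤ 1)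
  rw [add_add_sub_cancel, Gamma_add_one hs.ne', log_mul hs.ne' (Gamma_pos_of_pos hs).ne']
    at hlower
  have hlog₀ : log s ≤ log (s + t) := log_le_log hs (by linarith)
  have hlog : log (s + t) - log s ≤ 1 / s := by
    have := log_sub_log_le_sub_div hs hst
    rw [add_sub_cancel_left] at this
    exact this.trans (div_le_div_of_nonneg_right ht₁ hs.le)
  rw [abs_le]
  constructor
  · nlinarith [mul_le_of_le_one_left (sub_nonneg.2 hlog₀) (by linarith : 1 - t ≤ 1)]
  · linarith [one_div_pos.2 hs]

noncomputable def logStirling (x : ℝ) : ℝ := x * log x - x + log (2 * π * x) / 2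

theorem exp_logStirling {x : ℝ} (hx : 0 < x) :
    exp (logStirling x) = √(2 * π * x) * (x / exp 1) ^ x := by
  rw [rpow_def_of_pos (by positivity), log_div hx.ne' (exp_ne_zero 1), log_exp,
    ← exp_log (sqrt_pos.2 (by positivity : 0 < 2 * π * x)), ← exp_add, log_sqrt (by positivity)]
  unfold logStirling
  ring_nf

theorem abs_logStirling_add_sub_le {s t : ℝ} (hs : 0 < s) (ht₀ : 0 ≤ t) (ht₁ : t ≤ 1) :
    |logStirling (s + t) - logStirling s - t * log s| ≤ 2 / s := by
  have hst : 0 < s + t := by linarith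
  have hdiff : logStirling (s + t) - logStirling s - t * log s
      = (s + t + 1 / 2) * (log (s + t) - log s) - t := by
    simp only [logStirling]
    rw [log_mul (by positivity) hst.ne', log_mul (by positivity) hs.ne']
    ring
  have hupper := log_sub_log_le_sub_div hs hst
  have hlower := sub_div_le_log_sub_log hs hst
  rw [add_sub_cancel_left] at hupper hlower
  have h₁ : (s + t + 1 / 2) * (t / (s + t)) = t + t / (2 * (s + t)) := by field_simp
  have h₂ : (s + t + 1 / 2) * (t / s) = t + t * (t + 1 / 2) / s := by field_simp; ring
  have h₃ : t * (t + 1 / 2) / s ≤ 2 / s := by gcongr; nlinarith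
  rw [hdiff, abs_le]
  constructor
  · nlinarith [mul_le_mul_of_nonneg_left hlower (by linarith : 0 ≤ s + t + 1 / 2),
      div_nonneg ht₀ (by linarith : (0:ℝ) ≤ 2 * (s + t)), div_pos two_pos hs]
  · nlinarith [mul_le_mul_of_nonneg_left hupper (by linarith : 0 ≤ s + t + 1 / 2)]

noncomputable def stirlingError (x : ℝ) : ℝ := log (Gamma (x + 1)) - logStirling x

theorem abs_stirlingError_add_sub_le {s t : ℝ} (hs : 0 < s) (ht₀ : 0 ≤ t) (ht₁ : t ≤ 1) :
    |stirlingError (s + t) - stirlingError s| ≤ 4 / s := by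
  have hs₁ : 0 < s + 1 := by linarith
  have hGamma := abs_log_Gamma_add_sub_le hs₁ ht₀ ht₁
  have hStirling := abs_logStirling_add_sub_le hs ht₀ ht₁
  have hlog := log_sub_log_le_sub_div hs hs₁
  have hlog₀ : log s ≤ log (s + 1) := log_le_log hs (by linarith)
  rw [add_sub_cancel_left] at hlog
  have hshift : t * log (s + 1) - t * log s ≤ 1 / s := by nlinarith
  have hshift₀ : 0 ≤ t * log (s + 1) - t * log s := by nlinarith
  have hs_inv : 1 / (s + 1) ≤ 1 / s := one_div_le_one_div_of_le hs (by linarith)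
  have hfour : 4 / s = 1 / s + 2 / s + 1 / s := by ring
  rw [stirlingError, stirlingError, add_right_comm s t 1]
  rw [abs_le] at hGamma hStirling ⊢
  constructor <;> linarith

theorem tendsto_stirlingError_natCast :
    Tendsto (fun n : ℕ => stirlingError n) atTop (𝓝 0) := by
  have hlim : Tendsto (fun n => log (Stirling.stirlingSeq n) - log π / 2) atTop (𝓝 0) := by
    have := (Stirling.tendsto_stirlingSeq_sqrt_pi.log (by positivity)).sub_const (log π / 2)
    rwa [log_sqrt pi_pos.le, sub_self] at this
  refine hlim.congr' ?_
  filter_upwards [eventually_gt_atTop 0] with n hn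
  have hn' : (0 : ℝ) < n := by exact_mod_cast hn
  rw [Stirling.log_stirlingSeq_formula, stirlingError, Gamma_nat_eq_factorial, logStirling,
    log_div hn'.ne' (exp_ne_zero 1), log_exp, log_mul (mul_pos two_pos pi_pos).ne' hn'.ne',
    log_mul two_ne_zero pi_ne_zero, log_mul two_ne_zero hn'.ne']
  ring

theorem tendsto_stirlingError : Tendsto stirlingError atTop (𝓝 0) := by
  have hfloor := tendsto_stirlingError_natCast.comp (tendsto_nat_floor_atTop (α := ℝ))
  have hshift : Tendsto (fun x : ℝ => stirlingError x - stirlingError ⌊x⌋₊) atTop (𝓝 0) := by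
    refine squeeze_zero_norm' ?_
      ((tendsto_const_div_atTop_nhds_zero_nat 4).comp (tendsto_nat_floor_atTop (α := ℝ)))
    filter_upwards [eventually_ge_atTop 1] with x hx
    have hn : (0 : ℝ) < ⌊x⌋₊ := by exact_mod_cast Nat.floor_pos.2 hx
    have := abs_stirlingError_add_sub_le hn (sub_nonneg.2 (Nat.floor_le (by linarith)))
      (by linarith [Nat.lt_floor_add_one x])
    rwa [add_sub_cancel] at this
  simpa using hshift.add hfloor

theorem tendsto_Gamma_add_one_div_stirling :
    Tendsto (fun x => Gamma (x + 1) / (√(2 * π * x) * (x / exp 1) ^ x)) atTop (𝓝 1) := by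
  have hexp : Tendsto (fun x => exp (stirlingError x)) atTop (𝓝 1) := by
    simpa using tendsto_stirlingError.rexp
  refine hexp.congr' ?_
  filter_upwards [eventually_gt_atTop 0] with x hx
  rw [stirlingError, exp_sub, exp_log (Gamma_pos_of_pos (by linarith)), exp_logStirling hx]

theorem sinh_le_mul_cosh {y : ℝ} (hy : 0 ≤ y) : sinh y ≤ y * cosh y := by
  refine hasSum_le (fun n => ?_) (hasSum_sinh y) ((hasSum_cosh y).mul_left y)
  rw [pow_succ, mul_comm _ y, mul_div_assoc]
  gcongr
  omega

theorem mul_sinh_one_div_rpow_mem_Icc {x : ℝ} (hx : 0 < x) :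
    (x * sinh (1 / x)) ^ (x / 2) ∈ Set.Icc 1 (exp (1 / (4 * x))) := by
  have hinv : 0 < 1 / x := by positivity
  have hlower : 1 ≤ x * sinh (1 / x) := by
    have := mul_le_mul_of_nonneg_left (self_le_sinh_iff.2 hinv.le) hx.le
    rwa [mul_one_div_cancel hx.ne'] at this
  have hupper : x * sinh (1 / x) ≤ exp ((1 / x) ^ 2 / 2) :=
    calc x * sinh (1 / x) ≤ x * (1 / x * cosh (1 / x)) := by
          gcongr; exact sinh_le_mul_cosh hinv.le
      _ = cosh (1 / x) := by field_simp
      _ ≤ exp ((1 / x) ^ 2 / 2) := cosh_le_exp_half_sq _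
  refine ⟨one_le_rpow hlower (by positivity), ?_⟩
  calc (x * sinh (1 / x)) ^ (x / 2) ≤ exp ((1 / x) ^ 2 / 2) ^ (x / 2) := by gcongr
    _ = exp (1 / (4 * x)) := by rw [← exp_mul]; congr 1; field_simp; norm_num

theorem tendsto_mul_sinh_one_div_rpow :
    Tendsto (fun x : ℝ => (x * sinh (1 / x)) ^ (x / 2)) atTop (𝓝 1) := by
  have hlim : Tendsto (fun x : ℝ => exp (1 / (4 * x))) atTop (𝓝 1) := by
    simpa using ((tendsto_const_nhds (x := (1 : ℝ))).div_atTop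
      (tendsto_id.const_mul_atTop (four_pos : (0 : ℝ) < 4))).rexp
  have hbounds := (eventually_gt_atTop 0).mono fun _ => mul_sinh_one_div_rpow_mem_Icc
  exact tendsto_of_tendsto_of_tendsto_of_le_of_le' tendsto_const_nhds hlim
    (hbounds.mono fun _ h => h.1) (hbounds.mono fun _ h => h.2)

theorem stmt_7 :
    Tendsto (fun x : ℝ => Gamma (x + 1) /
      (Real.sqrt (2 * π * x) * (x / exp 1) ^ x *
        (x * Real.sinh (1 / x)) ^ (x / 2))) atTop (nhds 1) := by
  have := tendsto_Gamma_add_one_div_stirling.div tendsto_mul_sinh_one_div_rpow one_ne_zero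
  simpa only [Pi.div_def, div_div, div_one] using this
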